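/- arXiv:1802.00963 — 11 statements merged into one kernel-verified Lean document; each statement's English description precedes it below -/
import Mathlib

section
/- Let F be a field and x_1, …, x_n nonzero pairwise distinct elements of F, and let V = V(x_1,…,x_n) be the associated n×n Vandermonde-type matrix. Let S be the s×s submatrix of V obtained by choosing rows i_1, i_1+k, i_1+2k, …, i_1+(s−1)k (an arithmetic progression of row indices with common difference k ≥ 1, all indices at most n−1) and columns k_1, …, k_s. Then det S = x_{k_1}^{i_1} · x_{k_2}^{i_1} ⋯ x_{k_s}^{i_1} · det V(x_{k_1}^k, x_{k_2}^k, …, x_{k_s}^k). -/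
/-- Let `F` be a field and `x 1, …, x n` nonzero pairwise distinct
elements of `F`, and let `V = V(x_1,…,x_n)` be the Vandermonde-type matrix with
`(i,j)` entry `x_{j+1}^i`.  Let `S` be the `s × s` submatrix obtained by choosing rows
`i1, i1+k, …, i1+(s-1)k` (arithmetic progression with common difference `k ≥ 1`, all
indices at most `n-1`) and columns `k_1, …, k_s`.  Then
`det S = x_{k_1}^{i1} ⋯ x_{k_s}^{i1} ⋅ det V(x_{k_1}^k, …, x_{k_s}^k)`. -/
theorem vandermonde_arith_submatrix_det {F : Type*} [Field F]
    (n s k i1 : ℕ) (hk : 1 ≤ k) (hrow : i1 + (s - 1) * k ≤ n - 1)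
    (x : Fin n → F) (hx0 : ∀ j, x j ≠ 0) (hxinj : Function.Injective x)
    (cols : Fin s → Fin n) (hcols : Function.Injective cols) :
    (Matrix.of fun l m : Fin s => x (cols m) ^ (i1 + (l : ℕ) * k)).det =
      (∏ m : Fin s, x (cols m) ^ i1) *
        (Matrix.of fun l m : Fin s => (x (cols m) ^ k) ^ (l : ℕ)).det := by
  rw [← Matrix.det_mul_row]
  congr 1
  ext l m
  simp only [Matrix.of_apply]
  rw [pow_add, ← pow_mul, mul_comm (l : ℕ) k]
end

section
/- Let F be a field and x_1, …, x_n nonzero pairwise distinct elements of F, and let S be the s×s submatrix of the Vandermonde-type matrix V(x_1,…,x_n) obtained by choosing rows i_1, i_1+k, …, i_1+(s−1)k (arithmetic progression with common difference k ≥ 1, all indices at most n−1) and columns k_1, …, k_s. Then det S ≠ 0 if and only if det V(x_{k_1}^k, x_{k_2}^k, …, x_{k_s}^k) ≠ 0. -/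
/-- With `S` the `s × s` submatrix of the Vandermonde-type matrix
`V(x_1,…,x_n)` obtained by rows `i1, i1+k, …, i1+(s-1)k` (common difference `k ≥ 1`,
indices at most `n-1`) and columns `k_1, …, k_s`, one has
`det S ≠ 0 ↔ det V(x_{k_1}^k, …, x_{k_s}^k) ≠ 0`. -/
theorem vandermonde_arith_submatrix_det_ne_zero_iff {F : Type*} [Field F]
    (n s k i1 : ℕ) (hk : 1 ≤ k) (hrow : i1 + (s - 1) * k ≤ n - 1)
    (x : Fin n → F) (hx0 : ∀ j, x j ≠ 0) (hxinj : Function.Injective x)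
    (cols : Fin s → Fin n) (hcols : Function.Injective cols) :
    (Matrix.of fun l m : Fin s => x (cols m) ^ (i1 + (l : ℕ) * k)).det ≠ 0 ↔
      (Matrix.of fun l m : Fin s => (x (cols m) ^ k) ^ (l : ℕ)).det ≠ 0 := by
  have key : (Matrix.of fun l m : Fin s => (x (cols m) ^ i1) * ((x (cols m) ^ k) ^ (l : ℕ))).det
      = (∏ m : Fin s, x (cols m) ^ i1) * (Matrix.of fun l m : Fin s => (x (cols m) ^ k) ^ (l : ℕ)).det :=
    Matrix.det_mul_row (fun m : Fin s => x (cols m) ^ i1) _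
  have h : (Matrix.of fun l m : Fin s => x (cols m) ^ (i1 + (l : ℕ) * k))
      = Matrix.of fun l m : Fin s => (x (cols m) ^ i1) * ((x (cols m) ^ k) ^ (l : ℕ)) := by
    ext l m
    simp [pow_add, pow_mul, mul_comm]
  rw [h, key]
  constructor
  · intro hne hz
    exact hne (by rw [hz, mul_zero])
  · intro hne
    exact mul_ne_zero (Finset.prod_ne_zero_iff.mpr fun m _ => pow_ne_zero _ (hx0 _)) hne
end

section
/- Let F be a field and x_1, …, x_n nonzero pairwise distinct elements of F. Let S be the s×s submatrix of the Vandermonde-type matrix V(x_1,…,x_n) obtained by choosing s consecutive rows i_1, i_1+1, …, i_1+s−1 (all indices at most n−1) and any s distinct columns k_1, …, k_s. Then det S ≠ 0. -/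
/-! Rows `i1, …, i1 + s - 1` of the chosen columns form the transposed Vandermonde matrix of
the chosen points, with column `m` scaled by `x_m ^ i1`; both factors have nonzero determinant. -/

namespace Matrix

variable {R : Type*} [CommRing R] {s : ℕ}

theorem of_pow_add_eq_vandermonde_transpose_mul_diagonal (v : Fin s → R) (k : ℕ) :
    (of fun i j : Fin s => v j ^ (k + i)) = (vandermonde v)ᵀ * diagonal fun j => v j ^ k := by
  ext i j
  simp only [of_apply, mul_diagonal, transpose_apply, vandermonde_apply, pow_add, mul_comm]

theorem det_of_pow_add_ne_zero [IsDomain R] {v : Fin s → R}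
    (hv : Function.Injective v) (hv0 : ∀ j, v j ≠ 0) (k : ℕ) :
    (of fun i j : Fin s => v j ^ (k + i)).det ≠ 0 := by
  rw [of_pow_add_eq_vandermonde_transpose_mul_diagonal, det_mul, det_transpose, det_diagonal]
  exact mul_ne_zero (det_vandermonde_ne_zero_iff.mpr hv)
    (Finset.prod_ne_zero_iff.mpr fun j _ => pow_ne_zero k (hv0 j))

end Matrix

theorem vandermonde_consecutive_submatrix_det_ne_zero_general {F : Type*} [Field F]
    (n s i1 : ℕ)
    (x : Fin n → F) (hx0 : ∀ j, x j ≠ 0) (hxinj : Function.Injective x)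
    (cols : Fin s → Fin n) (hcols : Function.Injective cols) :
    (Matrix.of fun l m : Fin s => x (cols m) ^ (i1 + (l : ℕ))).det ≠ 0 :=
  Matrix.det_of_pow_add_ne_zero (hxinj.comp hcols) (fun m => hx0 (cols m)) i1

/-- Let `F` be a field and `x_1, …, x_n` nonzero pairwise distinct
elements of `F`.  Let `S` be the `s × s` submatrix of the Vandermonde-type matrix
`V(x_1,…,x_n)` obtained by choosing `s` consecutive rows `i1, i1+1, …, i1+s-1`
(all indices at most `n-1`) and any `s` distinct columns `k_1, …, k_s`.
Then `det S ≠ 0`. -/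
theorem vandermonde_consecutive_submatrix_det_ne_zero {F : Type*} [Field F]
    (n s i1 : ℕ) (hrow : i1 + (s - 1) ≤ n - 1)
    (x : Fin n → F) (hx0 : ∀ j, x j ≠ 0) (hxinj : Function.Injective x)
    (cols : Fin s → Fin n) (hcols : Function.Injective cols) :
    (Matrix.of fun l m : Fin s => x (cols m) ^ (i1 + (l : ℕ))).det ≠ 0 :=
  vandermonde_consecutive_submatrix_det_ne_zero_general n s i1 x hx0 hxinj cols hcols
end

section
/- Let F be a field, ω ∈ F a primitive n-th root of unity, and F_n the associated n×n Fourier matrix. Let k ≥ 1 with gcd(k, n) = 1, and let S be the s×s matrix whose (l, m) entry (0 ≤ l, m ≤ s−1) is ω^{(i_1 + l·k)·k_{m+1}}, where k_1 < k_2 < … < k_s are distinct column indices in {0, …, n−1} and i_1 ≥ 0 (i.e. S is formed from rows of F_n whose indices, taken modulo n, are in arithmetic progression with common difference k, and columns k_1, …, k_s). Then det S ≠ 0. -/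
/-!
Writing `ζ = ω ^ k`, the `(l, m)` entry is `ω ^ (i1 * k_m) * (ζ ^ k_m) ^ l`, so `S` is a
Vandermonde matrix in the nodes `ζ ^ k_m`, transposed and with its rows rescaled by the units
`ω ^ (i1 * k_m)`. Since `gcd(k, n) = 1`, `ζ` is again a primitive `n`-th root of unity, so the nodes
are distinct and the Vandermonde determinant does not vanish.
-/

open Function

theorem Matrix.det_of_mul_pow_ne_zero {R : Type*} [CommRing R] [IsDomain R] {s : ℕ}
    {c x : Fin s → R} (hc : ∀ m, c m ≠ 0) (hx : Injective x) :
    (of fun l m : Fin s => c m * x m ^ (l : ℕ)).det ≠ 0 := by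
  have htranspose : (of fun l m : Fin s => c m * x m ^ (l : ℕ)) =
      (of fun m l => c m * vandermonde x m l).transpose := rfl
  rw [htranspose, det_transpose, det_mul_column]
  exact mul_ne_zero (Finset.prod_ne_zero_iff.mpr fun m _ => hc m)
    (det_vandermonde_ne_zero_iff.mpr hx)

theorem IsPrimitiveRoot.injective_pow_mul_val {M : Type*} [CommMonoid M] {ζ : M} {n k : ℕ}
    (hζ : IsPrimitiveRoot ζ n) (hk : k.Coprime n) :
    Injective fun j : Fin n => ζ ^ (k * (j : ℕ)) := fun i j hij =>
  Fin.ext <| (hζ.pow_of_coprime k hk).pow_inj i.2 j.2 (by simpa only [pow_mul] using hij)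

theorem fourier_arith_submatrix_det_ne_zero_general {F : Type*} [Field F]
    (n s k i1 : ℕ) (ω : F) (hω : IsPrimitiveRoot ω n)
    (hcop : Nat.gcd k n = 1)
    (cols : Fin s → Fin n) (hcols : StrictMono cols) :
    (Matrix.of fun l m : Fin s => ω ^ ((i1 + (l : ℕ) * k) * (cols m : ℕ))).det ≠ 0 := by
  have hentries : (Matrix.of fun l m : Fin s => ω ^ ((i1 + (l : ℕ) * k) * (cols m : ℕ))) =
      Matrix.of fun l m : Fin s => ω ^ (i1 * (cols m : ℕ)) * (ω ^ (k * (cols m : ℕ))) ^ (l : ℕ) := by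
    ext l m
    simp only [Matrix.of_apply, ← pow_mul, ← pow_add]
    ring_nf
  rw [hentries]
  exact Matrix.det_of_mul_pow_ne_zero (fun m => pow_ne_zero _ (hω.ne_zero (cols m).pos.ne'))
    ((hω.injective_pow_mul_val hcop).comp hcols.injective)

/-- Let `ω ∈ F` be a primitive `n`-th root of unity and `F_n` the
associated Fourier matrix with `(i,j)` entry `ω^{ij}`.  Let `k ≥ 1` with
`gcd(k, n) = 1`, and let `S` be the `s × s` matrix whose `(l, m)` entry
(`0 ≤ l, m ≤ s-1`) is `ω^{(i1 + l·k)·k_{m+1}}`, where `k_1 < k_2 < … < k_s` are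
distinct column indices in `{0, …, n-1}` and `i1 ≥ 0`.  Then `det S ≠ 0`. -/
theorem fourier_arith_submatrix_det_ne_zero {F : Type*} [Field F]
    (n s k i1 : ℕ) (ω : F) (hω : IsPrimitiveRoot ω n)
    (hk : 1 ≤ k) (hcop : Nat.gcd k n = 1)
    (cols : Fin s → Fin n) (hcols : StrictMono cols) :
    (Matrix.of fun l m : Fin s => ω ^ ((i1 + (l : ℕ) * k) * (cols m : ℕ))).det ≠ 0 :=
  fourier_arith_submatrix_det_ne_zero_general n s k i1 ω hω hcop cols hcols
end

section
/- Let F be a field and x_1, …, x_n nonzero pairwise distinct elements of F, and let 𝒞_r be the linear code of length n over F generated by r consecutive rows r_1, r_1+1, …, r_1+r−1 of the Vandermonde-type matrix V(x_1,…,x_n) (with r_1 + r − 1 ≤ n−1 and 1 ≤ r ≤ n). Then these r rows are linearly independent and every nonzero codeword of 𝒞_r has Hamming weight at least n − r + 1; that is, 𝒞_r is an MDS (n, r, n−r+1) code. -/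
/-!
The codeword `∑ l, a l • (x j ^ (r1 + l))_j` equals `(x j ^ r1 * p.eval (x j))_j` for the polynomial
`p = ∑ l, a l X ^ l`, which is nonzero of degree `< r` when `a ≠ 0`. As every `x j` is nonzero and
`x` is injective, the zero coordinates correspond to distinct roots of `p`, of which there are at most
`r - 1`; hence the weight is at least `n - r + 1`. That bound is positive, so no nontrivial combination
of the rows vanishes, which is the linear independence.
-/

/-- The Hamming weight of a vector: the number of its nonzero coordinates. -/
noncomputable def hammingWt {n : ℕ} {F : Type*} [Zero F] (v : Fin n → F) : ℕ :=
  Nat.card {j : Fin n // v j ≠ 0}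

open Polynomial

section HammingWeight

variable {n : ℕ} {F : Type*}

@[simp]
theorem hammingWt_zero [Zero F] : hammingWt (0 : Fin n → F) = 0 := by
  simp [hammingWt]

theorem hammingWt_add_card_zeros [Zero F] (v : Fin n → F) :
    hammingWt v + Nat.card {j : Fin n // v j = 0} = n := by
  classical
  rw [hammingWt, add_comm, Nat.card_eq_fintype_card, Nat.card_eq_fintype_card,
    Fintype.card_subtype_compl, Nat.add_sub_of_le (Fintype.card_subtype_le _), Fintype.card_fin]

theorem hammingWt_mul_left_of_ne_zero [MulZeroClass F] [NoZeroDivisors F] {d v : Fin n → F}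
    (hd : ∀ j, d j ≠ 0) : hammingWt (fun j => d j * v j) = hammingWt v :=
  Nat.card_congr <| Equiv.subtypeEquivRight fun j => by simp [hd j]

end HammingWeight

namespace Polynomial

variable {R : Type*} [CommRing R] [IsDomain R]

theorem card_eval_eq_zero_le_natDegree {ι : Type*} {x : ι → R} (hx : Function.Injective x)
    {p : R[X]} (hp : p ≠ 0) : Nat.card {i // p.eval (x i) = 0} ≤ p.natDegree := by
  classical
  calc Nat.card {i // p.eval (x i) = 0}
      ≤ Nat.card p.roots.toFinset :=
        Nat.card_le_card_of_injective (fun i => ⟨x i, by simpa [hp] using i.2⟩)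
          fun i k h => Subtype.ext (hx (congrArg Subtype.val h))
    _ = p.roots.toFinset.card := Nat.card_eq_finsetCard _
    _ ≤ Multiset.card p.roots := Multiset.toFinset_card_le _
    _ ≤ p.natDegree := card_roots' p

theorem sub_natDegree_le_hammingWt_eval {n : ℕ} {x : Fin n → R} (hx : Function.Injective x)
    {p : R[X]} (hp : p ≠ 0) : n - p.natDegree ≤ hammingWt fun j => p.eval (x j) := by
  have := hammingWt_add_card_zeros fun j => p.eval (x j)
  have := card_eval_eq_zero_le_natDegree hx hp
  omega

end Polynomial

theorem sum_smul_pow_add_eq_eval_degreeLTEquiv_symm {ι R : Type*} [CommRing R] (x : ι → R)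
    (r r1 : ℕ) (a : Fin r → R) :
    ∑ l : Fin r, a l • (fun j => x j ^ (r1 + (l : ℕ))) =
      fun j => x j ^ r1 * ((degreeLTEquiv R r).symm a : R[X]).eval (x j) := by
  ext j
  rw [eval_eq_sum_degreeLTEquiv (Subtype.prop _), LinearEquiv.apply_symm_apply]
  simp [Finset.mul_sum, pow_add, mul_left_comm]

theorem sub_add_one_le_hammingWt_sum_smul_pow {R : Type*} [CommRing R] [IsDomain R] {n r : ℕ}
    (r1 : ℕ) (hrn : r ≤ n) {x : Fin n → R} (hx0 : ∀ j, x j ≠ 0) (hxinj : Function.Injective x)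
    {a : Fin r → R} (ha : a ≠ 0) :
    n - r + 1 ≤ hammingWt (∑ l : Fin r, a l • fun j => x j ^ (r1 + (l : ℕ))) := by
  rw [sum_smul_pow_add_eq_eval_degreeLTEquiv_symm,
    hammingWt_mul_left_of_ne_zero fun j => pow_ne_zero r1 (hx0 j)]
  set p := (degreeLTEquiv R r).symm a
  have hp : (p : R[X]) ≠ 0 := by simpa [p] using ha
  have hdeg : (p : R[X]).natDegree < r := (natDegree_lt_iff_degree_lt hp).mpr (mem_degreeLT.mp p.2)
  have := sub_natDegree_le_hammingWt_eval hxinj hp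
  omega

theorem vandermonde_consecutive_rows_code_mds_general {F : Type*} [Field F]
    (n r r1 : ℕ) (hrn : r ≤ n)
    (x : Fin n → F) (hx0 : ∀ j, x j ≠ 0) (hxinj : Function.Injective x) :
    LinearIndependent F (fun l : Fin r => fun j : Fin n => x j ^ (r1 + (l : ℕ))) ∧
      ∀ c ∈ Submodule.span F
          (Set.range fun l : Fin r => fun j : Fin n => x j ^ (r1 + (l : ℕ))),
        c ≠ 0 → n - r + 1 ≤ hammingWt c := by
  have hwt a (ha : a ≠ 0) := sub_add_one_le_hammingWt_sum_smul_pow r1 hrn hx0 hxinj ha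
  refine ⟨Fintype.linearIndependent_iff.mpr fun a hsum => ?_, fun c hc hc0 => ?_⟩
  · have ha : a = 0 := by_contra fun ha => by simpa [hsum] using hwt a ha
    exact congrFun ha
  · obtain ⟨a, rfl⟩ := (Submodule.mem_span_range_iff_exists_fun F).mp hc
    exact hwt a fun ha => hc0 (by simp [ha])

/-- Let `x_1, …, x_n` be nonzero pairwise distinct elements of a
field `F` and let `𝒞_r` be the linear code of length `n` generated by the `r`
consecutive rows `r1, r1+1, …, r1+r-1` of the Vandermonde-type matrix
`V(x_1,…,x_n)` (with `r1 + r - 1 ≤ n - 1` and `1 ≤ r ≤ n`).  Then these `r` rows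
are linearly independent and every nonzero codeword has Hamming weight at least
`n - r + 1`: `𝒞_r` is an MDS `(n, r, n-r+1)` code. -/
theorem vandermonde_consecutive_rows_code_mds {F : Type*} [Field F]
    (n r r1 : ℕ) (hr : 1 ≤ r) (hrn : r ≤ n) (hrow : r1 + r - 1 ≤ n - 1)
    (x : Fin n → F) (hx0 : ∀ j, x j ≠ 0) (hxinj : Function.Injective x) :
    LinearIndependent F (fun l : Fin r => fun j : Fin n => x j ^ (r1 + (l : ℕ))) ∧
      ∀ c ∈ Submodule.span F
          (Set.range fun l : Fin r => fun j : Fin n => x j ^ (r1 + (l : ℕ))),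
        c ≠ 0 → n - r + 1 ≤ hammingWt c :=
  vandermonde_consecutive_rows_code_mds_general n r r1 hrn x hx0 hxinj
end

section
/- Let F be a field, ω ∈ F a primitive n-th root of unity, and k ≥ 1 with gcd(k, n) = 1. Let 1 ≤ r ≤ n and let 𝒞 be the linear code of length n over F generated by the r vectors v_0, v_1, …, v_{r−1} where v_m has j-th coordinate ω^{(a + m·k)·j} for 0 ≤ j ≤ n−1 (i.e. the rows of the Fourier matrix F_n with indices a, a+k, …, a+(r−1)k taken modulo n). Then these r vectors are linearly independent and every nonzero codeword of 𝒞 has Hamming weight at least n − r + 1; that is, 𝒞 is an MDS (n, r, n−r+1) code. -/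
open Polynomial Finset

theorem Polynomial.card_filter_sum_mul_pow_eq_zero_lt {R ι : Type*} [CommRing R] [IsDomain R]
    [DecidableEq R] [Fintype ι] {x : ι → R} (hx : Function.Injective x) {r : ℕ}
    {f : Fin r → R} (hf : f ≠ 0) : #{i | ∑ m, f m * x i ^ (m : ℕ) = 0} < r := by
  set p := (degreeLTEquiv R r).symm f
  have hp : (p : R[X]) ≠ 0 :=
    (degreeLTEquiv_eq_zero_iff_eq_zero p.2).not.mp (by simpa [p] using hf)
  have hp_eval (y : R) : (p : R[X]).eval y = ∑ m, f m * y ^ (m : ℕ) := by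
    simp [eval_eq_sum_degreeLTEquiv p.2, p]
  by_contra! hr
  refine hp (eq_zero_of_natDegree_lt_card_of_eval_eq_zero' _
    (({i | ∑ m, f m * x i ^ (m : ℕ) = 0} : Finset ι).image x) ?_ ?_)
  · simp [hp_eval]
  · rw [card_image_of_injective _ hx]
    exact ((natDegree_lt_iff_degree_lt hp).mpr (mem_degreeLT.mp p.2)).trans_le hr

theorem hammingWt_add_card_filter_eq_zero {n : ℕ} {M : Type*} [Zero M] [DecidableEq M]
    (c : Fin n → M) : hammingWt c + #{j | c j = 0} = n := by
  rw [hammingWt, Nat.card_eq_fintype_card, Fintype.card_subtype, add_comm,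
    card_filter_add_card_filter_not, card_univ, Fintype.card_fin]

section ZerosOfCombinations

variable {F : Type*} [Field F] [DecidableEq F] {n r : ℕ} {v : Fin r → Fin n → F}

theorem linearIndependent_of_card_filter_sum_eq_zero_lt
    (hv : ∀ f : Fin r → F, f ≠ 0 → #{j | ∑ m, f m * v m j = 0} < r) (hrn : r ≤ n) :
    LinearIndependent F v := by
  rw [Fintype.linearIndependent_iff]
  intro f hf
  by_contra! hf0
  have hf_apply (j : Fin n) : ∑ m, f m * v m j = 0 := by simpa using congrFun hf j
  have hzeros := hv f (Function.ne_iff.mpr hf0)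
  simp only [hf_apply, filter_true, card_univ, Fintype.card_fin] at hzeros
  omega

theorem le_hammingWt_of_mem_span_of_card_filter_sum_eq_zero_lt
    (hv : ∀ f : Fin r → F, f ≠ 0 → #{j | ∑ m, f m * v m j = 0} < r) (hrn : r ≤ n)
    {c : Fin n → F} (hc : c ∈ Submodule.span F (Set.range v)) (hc0 : c ≠ 0) :
    n - r + 1 ≤ hammingWt c := by
  obtain ⟨f, rfl⟩ := (Submodule.mem_span_range_iff_exists_fun F).mp hc
  have hf : f ≠ 0 := by rintro rfl; simp at hc0
  have hwt := hammingWt_add_card_filter_eq_zero (∑ m, f m • v m)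
  have hzeros := hv f hf
  simp only [Finset.sum_apply, Pi.smul_apply, smul_eq_mul] at hwt
  omega

end ZerosOfCombinations

theorem IsPrimitiveRoot.card_filter_sum_mul_pow_eq_zero_lt {F : Type*} [Field F]
    [DecidableEq F] {n r k : ℕ} {ω : F} (hω : IsPrimitiveRoot ω n) (hk : k.Coprime n) (a : ℕ)
    {f : Fin r → F} (hf : f ≠ 0) :
    #{j : Fin n | ∑ m : Fin r, f m * ω ^ ((a + (m : ℕ) * k) * (j : ℕ)) = 0} < r := by
  have hinj : Function.Injective fun j : Fin n => (ω ^ k) ^ (j : ℕ) :=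
    fun i j h => Fin.ext ((hω.pow_of_coprime k hk).pow_inj i.isLt j.isLt h)
  convert Polynomial.card_filter_sum_mul_pow_eq_zero_lt hinj hf using 3 with j
  have hsplit (m : ℕ) : ω ^ ((a + m * k) * j) = ω ^ (a * j) * ((ω ^ k) ^ (j : ℕ)) ^ m := by
    rw [← pow_mul, ← pow_mul, ← pow_add]
    ring_nf
  have hω0 : ω ^ (a * (j : ℕ)) ≠ 0 := pow_ne_zero _ (hω.ne_zero (Fin.pos j).ne')
  simp [hsplit, ← mul_sum, mul_left_comm _ (ω ^ _), hω0]

theorem fourier_arith_rows_code_mds_general {F : Type*} [Field F]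
    (n r k a : ℕ) (ω : F) (hω : IsPrimitiveRoot ω n)
    (hcop : Nat.gcd k n = 1) (hrn : r ≤ n) :
    LinearIndependent F
        (fun m : Fin r => fun j : Fin n => ω ^ ((a + (m : ℕ) * k) * (j : ℕ))) ∧
      ∀ c ∈ Submodule.span F
          (Set.range fun m : Fin r => fun j : Fin n => ω ^ ((a + (m : ℕ) * k) * (j : ℕ))),
        c ≠ 0 → n - r + 1 ≤ hammingWt c := by
  classical
  have hzeros (f : Fin r → F) := hω.card_filter_sum_mul_pow_eq_zero_lt hcop a (f := f)
  exact ⟨linearIndependent_of_card_filter_sum_eq_zero_lt hzeros hrn,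
    fun _ hc hc0 => le_hammingWt_of_mem_span_of_card_filter_sum_eq_zero_lt hzeros hrn hc hc0⟩

/-- Let `ω ∈ F` be a primitive `n`-th root of unity and `k ≥ 1`
with `gcd(k, n) = 1`.  Let `1 ≤ r ≤ n` and let `𝒞` be the linear code of length `n`
generated by the `r` vectors `v_0, …, v_{r-1}` where `v_m` has `j`-th coordinate
`ω^{(a + m·k)·j}` (the rows of the Fourier matrix with indices `a, a+k, …, a+(r-1)k`
taken modulo `n`).  Then these `r` vectors are linearly independent and every
nonzero codeword of `𝒞` has Hamming weight at least `n - r + 1`: `𝒞` is an MDS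
`(n, r, n-r+1)` code. -/
theorem fourier_arith_rows_code_mds {F : Type*} [Field F]
    (n r k a : ℕ) (ω : F) (hω : IsPrimitiveRoot ω n)
    (hk : 1 ≤ k) (hcop : Nat.gcd k n = 1) (hr : 1 ≤ r) (hrn : r ≤ n) :
    LinearIndependent F
        (fun m : Fin r => fun j : Fin n => ω ^ ((a + (m : ℕ) * k) * (j : ℕ))) ∧
      ∀ c ∈ Submodule.span F
          (Set.range fun m : Fin r => fun j : Fin n => ω ^ ((a + (m : ℕ) * k) * (j : ℕ))),
        c ≠ 0 → n - r + 1 ≤ hammingWt c :=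
  fourier_arith_rows_code_mds_general n r k a ω hω hcop hrn
end

section
/- Let F be a field, x_1, …, x_n nonzero pairwise distinct elements of F, and 1 ≤ r ≤ n−1. Let 𝒞 be the linear code of length n over F generated by the first r rows (rows 0, 1, …, r−1) of the Vandermonde-type matrix V(x_1,…,x_n), and let 𝒞^⊥ = {v ∈ F^n : Σ_{j} v_j c_j = 0 for all c ∈ 𝒞} be its dual code. Then 𝒞^⊥ has dimension n − r and every nonzero vector of 𝒞^⊥ has Hamming weight at least r + 1; that is, 𝒞^⊥ is an MDS (n, n−r, r+1) code. -/
/-- The dual code `C^⊥ = {v ∈ F^n : Σ_j v_j c_j = 0 for all c ∈ C}`. -/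
def dualCode {F : Type*} [Field F] {n : ℕ} (C : Submodule F (Fin n → F)) :
    Submodule F (Fin n → F) where
  carrier := {v | ∀ c ∈ C, ∑ j, v j * c j = 0}
  zero_mem' := by
    intro c _
    simp
  add_mem' := by
    intro a b ha hb c hc
    simp only [Set.mem_setOf_eq] at *
    simp [add_mul, Finset.sum_add_distrib, ha c hc, hb c hc]
  smul_mem' := by
    intro r a ha c hc
    simp only [Set.mem_setOf_eq] at *
    simp [mul_assoc, ← Finset.mul_sum, ha c hc]



open Matrix

lemma vdm_det_ne_zero {F : Type*} [Field F] {m : ℕ} {y : Fin m → F}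
    (hy : Function.Injective y) : (Matrix.vandermonde y).det ≠ 0 := by
  rw [Matrix.det_vandermonde]
  refine Finset.prod_ne_zero_iff.mpr fun i _ => Finset.prod_ne_zero_iff.mpr fun j hj => ?_
  rw [Finset.mem_Ioi] at hj
  exact sub_ne_zero_of_ne fun h => (ne_of_gt hj) (hy h.symm).symm

lemma vdm_mulVec_injective {F : Type*} [Field F] {m : ℕ} {y : Fin m → F}
    (hy : Function.Injective y) :
    Function.Injective ((Matrix.vandermonde y)ᵀ.mulVec) := by
  apply Matrix.mulVec_injective_iff_isUnit.mpr
  rw [Matrix.isUnit_iff_isUnit_det, Matrix.det_transpose]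
  exact (vdm_det_ne_zero hy).isUnit

/-- Let `x_1, …, x_n` be nonzero pairwise distinct elements of a
field `F` and `1 ≤ r ≤ n-1`.  Let `𝒞` be the linear code generated by the first
`r` rows (rows `0, …, r-1`) of the Vandermonde-type matrix `V(x_1,…,x_n)` and
`𝒞^⊥` its dual code.  Then `𝒞^⊥` has dimension `n - r` and every nonzero vector
of `𝒞^⊥` has Hamming weight at least `r + 1`: `𝒞^⊥` is an MDS `(n, n-r, r+1)`
code. -/
theorem vandermonde_first_rows_dual_mds {F : Type*} [Field F]
    (n r : ℕ) (hr : 1 ≤ r) (hrn : r ≤ n - 1)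
    (x : Fin n → F) (hx0 : ∀ j, x j ≠ 0) (hxinj : Function.Injective x) :
    let C := Submodule.span F (Set.range fun l : Fin r => fun j : Fin n => x j ^ (l : ℕ))
    Module.finrank F (dualCode C) = n - r ∧
      ∀ v ∈ dualCode C, v ≠ 0 → r + 1 ≤ hammingWt v := by
  intro C
  classical
  have hn : r + 1 ≤ n := by omega
  have hrle : r ≤ n := by omega
  -- membership characterization
  have hmem : ∀ v : Fin n → F, v ∈ dualCode C ↔
      ∀ l : Fin r, ∑ j, x j ^ (l : ℕ) * v j = 0 := by
    intro v
    constructor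
    · intro hv l
      have := hv (fun j => x j ^ (l : ℕ)) (Submodule.subset_span ⟨l, rfl⟩)
      simpa [mul_comm] using this
    · intro h c hc
      induction hc using Submodule.span_induction with
      | mem c hcmem =>
        obtain ⟨l, rfl⟩ := hcmem
        simpa [mul_comm] using h l
      | zero => simp
      | add a b _ _ ha hb => simp [mul_add, Finset.sum_add_distrib, ha, hb]
      | smul t a _ ha =>
        simp only [Pi.smul_apply, smul_eq_mul, mul_left_comm, ← Finset.mul_sum, ha, mul_zero]
  constructor
  · -- finrank
    set B : Matrix (Fin r) (Fin n) F := Matrix.of fun l j => x j ^ (l : ℕ) with hB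
    have hker : dualCode C = LinearMap.ker B.mulVecLin := by
      ext v
      rw [hmem, LinearMap.mem_ker]
      constructor
      · intro h
        funext l
        simpa [B, Matrix.mulVec, dotProduct] using h l
      · intro h l
        have := congrFun h l
        simpa [B, Matrix.mulVec, dotProduct] using this
    have hsurj : Function.Surjective B.mulVecLin := by
      intro w
      set A : Matrix (Fin n) (Fin n) F := (Matrix.vandermonde x)ᵀ with hA
      have hdet : A.det ≠ 0 := by rw [hA, Matrix.det_transpose]; exact vdm_det_ne_zero hxinj
      set w' : Fin n → F := fun i => if h : (i : ℕ) < r then w ⟨i, h⟩ else 0 with hw'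
      refine ⟨A⁻¹.mulVec w', ?_⟩
      have hAv : A.mulVec (A⁻¹.mulVec w') = w' := by
        rw [Matrix.mulVec_mulVec, Matrix.mul_nonsing_inv _ (isUnit_iff_ne_zero.mpr hdet),
          Matrix.one_mulVec]
      funext l
      have : B.mulVecLin (A⁻¹.mulVec w') l = A.mulVec (A⁻¹.mulVec w') (Fin.castLE hrle l) := by
        simp [B, hA, Matrix.mulVecLin, Matrix.mulVec, dotProduct, Matrix.vandermonde]
      rw [this, hAv]
      simp [hw', Fin.castLE]
    rw [hker]
    have h1 := LinearMap.finrank_range_add_finrank_ker B.mulVecLin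
    rw [LinearMap.range_eq_top.mpr hsurj] at h1
    simp only [finrank_top, Module.finrank_fin_fun] at h1
    omega
  · -- distance
    intro v hv hv0
    by_contra hlt
    push_neg at hlt
    set s : Finset (Fin n) := Finset.univ.filter (fun j => v j ≠ 0) with hs
    have hwt : hammingWt v = s.card := by
      rw [hammingWt, Nat.card_eq_fintype_card, Fintype.card_subtype]
    set m := s.card with hm
    have hmr : m ≤ r := by omega
    have hm1 : 1 ≤ m := by
      rcases Function.ne_iff.mp hv0 with ⟨j, hj⟩
      have hj' : v j ≠ 0 := by simpa using hj
      have : j ∈ s := Finset.mem_filter.mpr ⟨Finset.mem_univ j, hj'⟩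
      exact Finset.card_pos.mpr ⟨j, this⟩
    have g := s.orderIsoOfFin hm.symm
    set y : Fin m → F := fun k => x (g k) with hy
    have hyinj : Function.Injective y := by
      intro a b hab
      exact g.injective (Subtype.ext (hxinj hab))
    set u : Fin m → F := fun k => v (g k) with hu
    have hu0 : ∀ k, u k ≠ 0 := by
      intro k
      have h2 := (g k).2
      exact (Finset.mem_filter.mp h2).2
    have hvec : (Matrix.vandermonde y)ᵀ.mulVec u = 0 := by
      funext l
      have hsum1 : ∑ k, y k ^ (l : ℕ) * u k = ∑ j ∈ s, x j ^ (l : ℕ) * v j := by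
        rw [← Finset.sum_coe_sort s (fun j => x j ^ (l : ℕ) * v j)]
        exact Equiv.sum_comp g.toEquiv (fun j : s => x (j : Fin n) ^ (l : ℕ) * v (j : Fin n))
      have hsum2 : ∑ j ∈ s, x j ^ (l : ℕ) * v j = ∑ j, x j ^ (l : ℕ) * v j := by
        refine Finset.sum_subset (Finset.subset_univ s) ?_
        intro j _ hj
        have : v j = 0 := by
          by_contra h
          exact hj (by simp [hs, h])
        simp [this]
      have h0 := (hmem v).mp hv ⟨(l : ℕ), lt_of_lt_of_le l.2 hmr⟩
      simp only [Matrix.mulVec, dotProduct, Matrix.transpose_apply, Matrix.vandermonde]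
      show ∑ k, y k ^ (l : ℕ) * u k = 0
      rw [hsum1, hsum2]
      exact h0
    have : u = 0 := vdm_mulVec_injective hyinj (by rw [hvec, Matrix.mulVec_zero])
    exact hu0 ⟨0, hm1⟩ (by rw [this]; rfl)
end

section
/- Let F be a field, ω ∈ F a primitive n-th root of unity, and suppose n = r + 2t with r ≥ 1 and t ≥ 1. Let w ∈ F^n have Hamming weight at most t and define the syndromes α_i = Σ_{l=0}^{n−1} ω^{i·l} w_l for i = 1, …, 2t. Suppose x = (x_1, …, x_{t+1}) ∈ F^{t+1} is nonzero and lies in the kernel of the t×(t+1) Hankel matrix of syndromes, i.e. Σ_{j=1}^{t+1} x_j · α_{m+j−1} = 0 for every m = 1, …, t. Define a ∈ F^n by a_l = Σ_{j=1}^{t+1} x_j ω^{j·l} for 0 ≤ l ≤ n−1. Then a_l = 0 for every index l with w_l ≠ 0 (the zero set of a contains the support of the error vector w). -/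
/-- Let `ω ∈ F` be a primitive `n`-th root of unity with
`n = r + 2t`, `r ≥ 1`, `t ≥ 1`.  Let `w ∈ F^n` have Hamming weight at most `t`
and let `α_i = Σ_l ω^{i·l} w_l` (for `i = 1, …, 2t`) be its syndromes.  Suppose
`x = (x_1, …, x_{t+1})` is nonzero and lies in the kernel of the `t × (t+1)`
Hankel matrix of syndromes, i.e. `Σ_{j=1}^{t+1} x_j · α_{m+j-1} = 0` for every
`m = 1, …, t`.  Define `a ∈ F^n` by `a_l = Σ_{j=1}^{t+1} x_j ω^{j·l}`.  Then
`a_l = 0` for every index `l` with `w_l ≠ 0`: the zero set of `a` contains the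
support of the error vector `w`. -/
theorem fourier_hankel_kernel_locates_errors {F : Type*} [Field F]
    (n r t : ℕ) (ω : F) (hω : IsPrimitiveRoot ω n)
    (hr : 1 ≤ r) (ht : 1 ≤ t) (hn : n = r + 2 * t)
    (w : Fin n → F) (hw : hammingWt w ≤ t)
    (x : Fin (t + 1) → F) (hx : x ≠ 0)
    (hker : ∀ m : Fin t,
      ∑ j : Fin (t + 1),
        x j * (∑ l : Fin n, ω ^ (((m : ℕ) + (j : ℕ) + 1) * (l : ℕ)) * w l) = 0) :
    ∀ l : Fin n, w l ≠ 0 →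
      (∑ j : Fin (t + 1), x j * ω ^ (((j : ℕ) + 1) * (l : ℕ))) = 0 := by
  classical
  set a : Fin n → F := fun l => ∑ j : Fin (t + 1), x j * ω ^ (((j : ℕ) + 1) * (l : ℕ)) with ha
  set S : Finset (Fin n) := Finset.univ.filter (fun i => w i ≠ 0) with hS
  have hcard : S.card ≤ t := by
    have : hammingWt w = S.card := by
      simp [hammingWt, Nat.card_eq_fintype_card, Fintype.card_subtype, hS]
    omega
  -- key identity
  have key : ∀ m : ℕ, m < t → ∑ i ∈ S, ω ^ (m * (i : ℕ)) * (w i * a i) = 0 := by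
    intro m hm
    have h0 := hker ⟨m, hm⟩
    have h1 : ∀ i : Fin n, ω ^ (m * (i : ℕ)) * (w i * a i)
        = ∑ j : Fin (t + 1), x j * (ω ^ ((m + (j : ℕ) + 1) * (i : ℕ)) * w i) := by
      intro i
      rw [ha, Finset.mul_sum, Finset.mul_sum]
      refine Finset.sum_congr rfl fun j _ => ?_
      have h2 : (m + (j : ℕ) + 1) * (i : ℕ) = m * (i : ℕ) + ((j : ℕ) + 1) * (i : ℕ) := by ring
      rw [h2, pow_add]; ring
    have h3 : ∑ i : Fin n, ω ^ (m * (i : ℕ)) * (w i * a i) = 0 := by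
      simp only [h1]
      rw [Finset.sum_comm]
      rw [← h0]
      exact Finset.sum_congr rfl fun j _ => by rw [Finset.mul_sum]
    rw [← h3]
    apply Finset.sum_subset (Finset.subset_univ S)
    intro i _ hi
    have : w i = 0 := by
      by_contra h
      exact hi (by simp [hS, h])
    simp [this]
  -- Vandermonde
  set s : ℕ := S.card with hs
  set e : S ≃ Fin s := S.equivFin with he
  set z : Fin s → F := fun i => ω ^ ((e.symm i : Fin n) : ℕ) with hz
  have hzinj : Function.Injective z := by
    intro i j hij
    have := hω.pow_inj (e.symm i : Fin n).2 (e.symm j : Fin n).2 hij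
    have : (e.symm i : Fin n) = (e.symm j : Fin n) := Fin.ext this
    exact e.symm.injective (Subtype.ext this)
  set M : Matrix (Fin s) (Fin s) F := (Matrix.vandermonde z).transpose with hM
  have hdet : M.det ≠ 0 := by
    rw [hM, Matrix.det_transpose]
    exact (Matrix.det_vandermonde_ne_zero_iff).2 hzinj
  set c : Fin s → F := fun i => w (e.symm i : Fin n) * a (e.symm i : Fin n) with hc
  have hmv : M.mulVec c = 0 := by
    funext m
    have hmt : (m : ℕ) < t := lt_of_lt_of_le m.2 hcard
    have hk := key m hmt
    simp only [Matrix.mulVec, dotProduct, hM, Matrix.transpose_apply,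
      Matrix.vandermonde, Matrix.of_apply, Pi.zero_apply]
    rw [← hk]
    rw [← Finset.sum_coe_sort S (fun i => ω ^ ((m : ℕ) * (i : ℕ)) * (w i * a i))]
    rw [← e.symm.sum_comp (fun i => ω ^ ((m : ℕ) * ((i : Fin n) : ℕ)) * (w i * a i))]
    refine Finset.sum_congr rfl fun j _ => ?_
    rw [hz, hc, ← pow_mul, Nat.mul_comm]
  have hc0 : c = 0 := Matrix.eq_zero_of_mulVec_eq_zero hdet hmv
  intro l hl
  have hlS : l ∈ S := by simp [hS, hl]
  have : c (e ⟨l, hlS⟩) = 0 := by rw [hc0]; rfl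
  rw [hc] at this
  simp only [Equiv.symm_apply_apply] at this
  rcases mul_eq_zero.1 this with h | h
  · exact absurd h hl
  · exact h
end

section
/- Let F be a field, ω ∈ F a primitive n-th root of unity, and t ≥ 1 with 2t < n. If w, w′ ∈ F^n each have Hamming weight at most t and have equal syndromes Σ_{l=0}^{n−1} ω^{i·l} w_l = Σ_{l=0}^{n−1} ω^{i·l} w′_l for every i = 1, …, 2t, then w = w′; that is, an error vector of weight at most t is uniquely determined by its 2t syndromes with respect to the Fourier rows E_1, …, E_{2t}. -/
lemma hammingWt_eq_card {n : ℕ} {F : Type*} [Zero F] [DecidableEq F] (v : Fin n → F) :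
    hammingWt v = (Finset.univ.filter fun j => v j ≠ 0).card := by
  simp [hammingWt, Nat.card_eq_fintype_card, Fintype.card_subtype]

/-- Let `ω ∈ F` be a primitive `n`-th root of unity and `t ≥ 1`
with `2t < n`.  If `w, w' ∈ F^n` each have Hamming weight at most `t` and have
equal syndromes `Σ_l ω^{i·l} w_l = Σ_l ω^{i·l} w'_l` for every `i = 1, …, 2t`,
then `w = w'`: an error vector of weight at most `t` is uniquely determined by
its `2t` syndromes with respect to the Fourier rows `E_1, …, E_{2t}`. -/
theorem fourier_syndromes_determine_error {F : Type*} [Field F]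
    (n t : ℕ) (ω : F) (hω : IsPrimitiveRoot ω n) (ht : 1 ≤ t) (htn : 2 * t < n)
    (w w' : Fin n → F) (hw : hammingWt w ≤ t) (hw' : hammingWt w' ≤ t)
    (hsyn : ∀ i : Fin (2 * t),
      ∑ l : Fin n, ω ^ (((i : ℕ) + 1) * (l : ℕ)) * w l =
        ∑ l : Fin n, ω ^ (((i : ℕ) + 1) * (l : ℕ)) * w' l) :
    w = w' := by
  classical
  have hn : 0 < n := lt_trans (by omega) htn
  have hωne : ω ≠ 0 := by
    intro h
    have := hω.pow_eq_one
    rw [h, zero_pow hn.ne'] at this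
    exact zero_ne_one this
  set v : Fin n → F := fun l => w l - w' l with hv
  set S : Finset (Fin n) := Finset.univ.filter (fun l => v l ≠ 0) with hS
  -- S ⊆ supp w ∪ supp w'
  have hsub : S ⊆ (Finset.univ.filter fun l => w l ≠ 0) ∪
      (Finset.univ.filter fun l => w' l ≠ 0) := by
    intro l hl
    simp only [hS, Finset.mem_filter, Finset.mem_union, Finset.mem_univ, true_and] at hl ⊢
    by_contra hc
    push_neg at hc
    simp [hv, hc.1, hc.2] at hl
  have hcard : S.card ≤ 2 * t := by
    calc S.card ≤ _ := Finset.card_le_card hsub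
    _ ≤ _ := Finset.card_union_le _ _
    _ ≤ t + t := by
        rw [hammingWt_eq_card] at hw hw'; omega
    _ = 2 * t := by ring
  set s := S.card with hs
  set e : Fin s → Fin n := fun j => ((S.equivFin.symm j : S) : Fin n) with he
  have heS : ∀ j, e j ∈ S := fun j => (S.equivFin.symm j).2
  have he_inj : Function.Injective e := fun a b h => by
    apply S.equivFin.symm.injective
    exact Subtype.ext h
  set x : Fin s → F := fun j => ω ^ (e j : ℕ) with hx
  have hx_inj : Function.Injective x := by
    intro a b h
    apply he_inj
    exact Fin.ext (hω.pow_inj (e a).2 (e b).2 h)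
  have hxne : ∀ j, x j ≠ 0 := fun j => pow_ne_zero _ hωne
  set M : Matrix (Fin s) (Fin s) F := fun i j => x j ^ ((i : ℕ) + 1) with hM
  set c : Fin s → F := fun j => v (e j) with hc
  -- M.mulVec c = 0
  have hMc : M.mulVec c = 0 := by
    funext i
    have hilt : (i : ℕ) < 2 * t := lt_of_lt_of_le i.2 hcard
    have hsynd := hsyn ⟨i, hilt⟩
    have key : ∑ l : Fin n, ω ^ (((i : ℕ) + 1) * (l : ℕ)) * v l = 0 := by
      simp only [hv, mul_sub, Finset.sum_sub_distrib]
      simpa using sub_eq_zero_of_eq hsynd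
    have hfull : ∑ l ∈ S, ω ^ (((i : ℕ) + 1) * (l : ℕ)) * v l = 0 := by
      rw [← key]
      apply Finset.sum_subset (Finset.subset_univ _)
      intro l _ hl
      simp only [hS, Finset.mem_filter, Finset.mem_univ, true_and, not_not] at hl
      simp [hl]
    have hre : ∑ j : Fin s, ω ^ (((i : ℕ) + 1) * ((e j : Fin n) : ℕ)) * v (e j)
        = ∑ l ∈ S, ω ^ (((i : ℕ) + 1) * (l : ℕ)) * v l := by
      rw [← Finset.sum_attach S (fun l => ω ^ (((i : ℕ) + 1) * (l : ℕ)) * v l)]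
      exact (Equiv.sum_comp S.equivFin.symm
        (fun l : S => ω ^ (((i : ℕ) + 1) * ((l : Fin n) : ℕ)) * v l))
    simp only [Matrix.mulVec, dotProduct, Pi.zero_apply, hM, hc, hx]
    rw [← hfull, ← hre]
    apply Finset.sum_congr rfl
    intro j _
    congr 1
    rw [← pow_mul, mul_comm]
  -- det M ≠ 0
  have hdet : M.det ≠ 0 := by
    have hMeq : M = (Matrix.vandermonde x).transpose * Matrix.diagonal x := by
      funext i j
      simp [hM, Matrix.mul_diagonal, Matrix.vandermonde, pow_succ, mul_comm]
    rw [hMeq, Matrix.det_mul, Matrix.det_transpose, Matrix.det_diagonal]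
    apply mul_ne_zero
    · rw [Matrix.det_vandermonde_ne_zero_iff]
      exact hx_inj
    · exact Finset.prod_ne_zero_iff.2 fun j _ => hxne j
  have hcz : c = 0 := by
    have hinj : Function.Injective M.mulVec :=
      Matrix.mulVec_injective_iff_isUnit.2 (Matrix.isUnit_iff_isUnit_det M |>.2
        (isUnit_iff_ne_zero.2 hdet))
    apply hinj
    rw [hMc, Matrix.mulVec_zero]
  -- conclude
  funext l
  by_contra hne
  have hlS : l ∈ S := by
    simp [hS, hv, sub_eq_zero, hne]
  have : v l = 0 := by
    have := congrFun hcz (S.equivFin ⟨l, hlS⟩)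
    simpa [hc, he] using this
  rw [hv] at this
  exact hne (sub_eq_zero.mp this)
end

section
/- Let n ≥ 2, let p be a prime not dividing n, and let 1 ≤ r ≤ n. Then over the finite field GF(p^{φ(n)}), where φ denotes Euler's totient function, there exists a linear code of length n and dimension r in which every nonzero codeword has Hamming weight at least n − r + 1; that is, an MDS (n, r, n−r+1) code exists over GF(p^{φ(n)}). -/
/-- Let `n ≥ 2`, let `p` be a prime not dividing `n`, and let
`1 ≤ r ≤ n`.  Then over the finite field `GF(p^{φ(n)})` (where `φ` is Euler's
totient function) there exists a linear code of length `n` and dimension `r`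
in which every nonzero codeword has Hamming weight at least `n - r + 1`:
an MDS `(n, r, n-r+1)` code exists over `GF(p^{φ(n)})`. -/
theorem exists_mds_code_over_galois_field_totient (n p r : ℕ) [hp : Fact p.Prime]
    (hn : 2 ≤ n) (hpn : ¬ p ∣ n) (hr : 1 ≤ r) (hrn : r ≤ n) :
    ∃ C : Submodule (GaloisField p (Nat.totient n)) (Fin n → GaloisField p (Nat.totient n)),
      Module.finrank (GaloisField p (Nat.totient n)) C = r ∧
        ∀ c ∈ C, c ≠ 0 → n - r + 1 ≤ hammingWt c := by
  classical
  set F := GaloisField p (Nat.totient n) with hF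
  -- the field has at least `n` elements
  have htot : Nat.totient n ≠ 0 := Nat.totient_pos.mpr (by omega) |>.ne'
  have hcardF : Nat.card F = p ^ Nat.totient n := GaloisField.card p _ htot
  have hcop : Nat.Coprime p n := (Nat.Prime.coprime_iff_not_dvd hp.out).mpr hpn
  have hmod : p ^ Nat.totient n ≡ 1 [MOD n] := Nat.ModEq.pow_totient hcop
  have hp1 : 1 ≤ p ^ Nat.totient n := Nat.one_le_pow _ _ hp.out.pos
  have hdvd : n ∣ p ^ Nat.totient n - 1 := (Nat.modEq_iff_dvd' hp1).mp hmod.symm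
  have hq1 : 1 < p ^ Nat.totient n := Nat.one_lt_pow htot hp.out.one_lt
  have hle : n ≤ Nat.card F := by
    rw [hcardF]
    have := Nat.le_of_dvd (by omega) hdvd
    omega
  have : Fintype F := Fintype.ofFinite F
  have hle' : Fintype.card (Fin n) ≤ Fintype.card F := by
    rwa [Fintype.card_fin, ← Nat.card_eq_fintype_card]
  obtain ⟨α⟩ := Function.Embedding.nonempty_iff_card_le.mpr hle'
  -- the Reed–Solomon code
  let L : Polynomial.degreeLT F r →ₗ[F] (Fin n → F) :=
    { toFun := fun q i => Polynomial.eval (α i) (q : Polynomial F)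
      map_add' := by intro a b; funext i; simp
      map_smul' := by intro a b; funext i; simp }
  refine ⟨LinearMap.range L, ?_, ?_⟩
  · have hinj : Function.Injective L := by
      rw [injective_iff_map_eq_zero]
      intro q hq
      have heval : ∀ i, Polynomial.eval (α i) (q : Polynomial F) = 0 := by
        intro i; exact congrFun hq i
      have hdeg : (q : Polynomial F).natDegree < Fintype.card (Fin n) := by
        rw [Fintype.card_fin]
        rcases eq_or_ne (q : Polynomial F) 0 with h0 | h0
        · rw [h0]; simpa using by omega
        · have := Polynomial.mem_degreeLT.mp q.2
          have := (Polynomial.natDegree_lt_iff_degree_lt h0).mpr this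
          omega
      have := Polynomial.eq_zero_of_natDegree_lt_card_of_eval_eq_zero
        (q : Polynomial F) α.injective heval hdeg
      exact Subtype.ext this
    rw [LinearMap.finrank_range_of_inj hinj]
    have e := Polynomial.degreeLTEquiv F r
    rw [LinearEquiv.finrank_eq e]
    simp
  · rintro c ⟨q, rfl⟩ hc0
    have hq0 : (q : Polynomial F) ≠ 0 := by
      intro h
      apply hc0
      funext i
      simp [L, h]
    -- zeros inject into roots
    have hdeg : (q : Polynomial F).natDegree ≤ r - 1 := by
      have := Polynomial.mem_degreeLT.mp q.2
      have := (Polynomial.natDegree_lt_iff_degree_lt hq0).mpr this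
      omega
    set Z : Finset (Fin n) := Finset.univ.filter (fun i => Polynomial.eval (α i) (q : Polynomial F) = 0) with hZ
    have hZcard : Z.card ≤ r - 1 := by
      have himg : Z.image α ⊆ (q : Polynomial F).roots.toFinset := by
        intro x hx
        simp only [Finset.mem_image] at hx
        obtain ⟨i, hi, rfl⟩ := hx
        rw [Multiset.mem_toFinset, Polynomial.mem_roots hq0]
        exact (Finset.mem_filter.mp hi).2
      calc Z.card = (Z.image α).card := (Finset.card_image_of_injective _ α.injective).symm
        _ ≤ (q : Polynomial F).roots.toFinset.card := Finset.card_le_card himg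
        _ ≤ Multiset.card (q : Polynomial F).roots := Multiset.toFinset_card_le _
        _ ≤ (q : Polynomial F).natDegree := Polynomial.card_roots' _
        _ ≤ r - 1 := hdeg
    have hwt : hammingWt (L q) = n - Z.card := by
      rw [hammingWt, Nat.card_eq_fintype_card, Fintype.card_subtype]
      have : (Finset.univ.filter (fun j => L q j ≠ 0)) = Zᶜ := by
        ext i
        simp [Z, L]
      rw [this, Finset.card_compl, Fintype.card_fin]
    omega
end

section
/- Let q = p^s be a prime power with q ≥ 3 and set n = q − 1. Then for every 1 ≤ r ≤ n there exists a linear code of length n and dimension r over the finite field GF(q) in which every nonzero codeword has Hamming weight at least n − r + 1; that is, for every rate r/n an MDS (n, r, n−r+1) code exists over GF(q) with n = q − 1. -/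
open Polynomial Finset

theorem hammingWt_eq_hammingNorm {n : ℕ} {F : Type*} [Zero F] [DecidableEq F] (v : Fin n → F) :
    hammingWt v = hammingNorm v := by
  rw [hammingWt, Nat.card_eq_fintype_card, Fintype.card_subtype, hammingNorm]

theorem hammingNorm_add_card_filter_eq_zero {ι β : Type*} [Fintype ι] [Zero β] [DecidableEq β]
    (x : ι → β) : hammingNorm x + #{i | x i = 0} = Fintype.card ι := by
  rw [hammingNorm, add_comm, ← card_univ]
  exact card_filter_add_card_filter_not _

namespace Polynomial

theorem card_filter_eval_eq_zero_lt {R ι : Type*} [CommRing R] [IsDomain R] [DecidableEq R]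
    [Fintype ι] {α : ι → R} (hα : Function.Injective α) {r : ℕ} {f : R[X]}
    (hf : f ∈ degreeLT R r) (hf0 : f ≠ 0) : #{j | f.eval (α j) = 0} < r := by
  by_contra! hr
  exact hf0 <| eq_zero_of_degree_lt_of_eval_index_eq_zero _ hα.injOn
    ((mem_degreeLT.mp hf).trans_le (by exact_mod_cast hr)) fun j hj => (mem_filter.mp hj).2

variable {F ι : Type*} [Field F]

noncomputable def evalAtPoints (α : ι → F) : F[X] →ₗ[F] (ι → F) :=
  LinearMap.pi fun j => leval (α j)

@[simp]
theorem evalAtPoints_apply (α : ι → F) (f : F[X]) (j : ι) :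
    evalAtPoints α f j = f.eval (α j) :=
  rfl

noncomputable def reedSolomonCode (α : ι → F) (r : ℕ) : Submodule F (ι → F) :=
  (degreeLT F r).map (evalAtPoints α)

variable [Fintype ι] {α : ι → F} {r : ℕ}

theorem injective_evalAtPoints_domRestrict_degreeLT (hα : Function.Injective α)
    (hr : r ≤ Fintype.card ι) :
    Function.Injective ((evalAtPoints α).domRestrict (degreeLT F r)) := by
  have hlt {f : F[X]} (hf : f ∈ degreeLT F r) : f.degree < #(univ : Finset ι) :=
    (mem_degreeLT.mp hf).trans_le (by exact_mod_cast hr)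
  rintro ⟨f, hf⟩ ⟨g, hg⟩ hfg
  exact Subtype.ext <| eq_of_degrees_lt_of_eval_index_eq univ hα.injOn (hlt hf) (hlt hg)
    fun j _ => congrFun hfg j

theorem finrank_reedSolomonCode (hα : Function.Injective α) (hr : r ≤ Fintype.card ι) :
    Module.finrank F (reedSolomonCode α r) = r := by
  rw [reedSolomonCode, ← LinearMap.range_domRestrict,
    LinearMap.finrank_range_of_inj (injective_evalAtPoints_domRestrict_degreeLT hα hr),
    (degreeLTEquiv F r).finrank_eq, Module.finrank_fin_fun]

theorem card_lt_hammingNorm_add_of_mem_reedSolomonCode [DecidableEq F]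
    (hα : Function.Injective α) {c : ι → F} (hc : c ∈ reedSolomonCode α r) (hc0 : c ≠ 0) :
    Fintype.card ι < hammingNorm c + r := by
  obtain ⟨f, hf, rfl⟩ := hc
  have hf0 : f ≠ 0 := by
    rintro rfl
    exact hc0 (map_zero _)
  have hzeros : #{j | evalAtPoints α f j = 0} < r := card_filter_eval_eq_zero_lt hα hf hf0
  have hsplit := hammingNorm_add_card_filter_eq_zero (evalAtPoints α f)
  omega

end Polynomial

theorem exists_mds_code_of_le_card {F : Type*} [Field F] [Fintype F] [DecidableEq F] {n r : ℕ}
    (hn : n ≤ Fintype.card F) (hrn : r ≤ n) :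
    ∃ C : Submodule F (Fin n → F), Module.finrank F C = r ∧
      ∀ c ∈ C, c ≠ 0 → n - r + 1 ≤ hammingNorm c := by
  obtain ⟨α⟩ :=
    Function.Embedding.nonempty_of_card_le (by simpa using hn : Fintype.card (Fin n) ≤ _)
  refine ⟨reedSolomonCode α r, finrank_reedSolomonCode α.injective (by simpa using hrn),
    fun c hc hc0 => ?_⟩
  have hweight := card_lt_hammingNorm_add_of_mem_reedSolomonCode α.injective hc hc0
  rw [Fintype.card_fin] at hweight
  omega

theorem exists_mds_code_over_galois_field_full_length_general (p s : ℕ) [hp : Fact p.Prime]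
    (r : ℕ) (hrn : r ≤ p ^ s - 1) :
    ∃ C : Submodule (GaloisField p s) (Fin (p ^ s - 1) → GaloisField p s),
      Module.finrank (GaloisField p s) C = r ∧
        ∀ c ∈ C, c ≠ 0 → (p ^ s - 1) - r + 1 ≤ hammingWt c := by
  classical
  have := Fintype.ofFinite (GaloisField p s)
  have hcard : p ^ s - 1 ≤ Fintype.card (GaloisField p s) := by
    rcases eq_or_ne s 0 with rfl | hs
    · simp
    · rw [← Nat.card_eq_fintype_card, GaloisField.card p s hs]
      exact Nat.sub_le _ _
  simpa only [hammingWt_eq_hammingNorm] using exists_mds_code_of_le_card hcard hrn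

/-- Let `q = p^s` be a prime power with `q ≥ 3` and set
`n = q - 1`.  Then for every `1 ≤ r ≤ n` there exists a linear code of length `n`
and dimension `r` over the finite field `GF(q)` in which every nonzero codeword
has Hamming weight at least `n - r + 1`: for every rate `r/n` an MDS
`(n, r, n-r+1)` code exists over `GF(q)` with `n = q - 1`. -/
theorem exists_mds_code_over_galois_field_full_length (p s : ℕ) [hp : Fact p.Prime]
    (hq : 3 ≤ p ^ s) (r : ℕ) (hr : 1 ≤ r) (hrn : r ≤ p ^ s - 1) :
    ∃ C : Submodule (GaloisField p s) (Fin (p ^ s - 1) → GaloisField p s),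
      Module.finrank (GaloisField p s) C = r ∧
        ∀ c ∈ C, c ≠ 0 → (p ^ s - 1) - r + 1 ≤ hammingWt c :=
  exists_mds_code_over_galois_field_full_length_general p s (hp := hp) r hrn
end
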